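/- arXiv:1505.02102 — 9 statements merged into one kernel-verified Lean document; each statement's English description precedes it below -/
import Mathlib

section
/- Let S be a semigroup and let F be a maximal filter among filters on S consisting entirely of S-thick sets. Then for every A ∈ F and every s ∈ S, the set s⁻¹A belongs to F. -/
open Set Filter

attribute [local instance] Ultrafilter.mul Ultrafilter.semigroup

def Thick {S : Type*} [Semigroup S] (A : Set S) : Prop :=
  ∀ F : Finset S, ∃ t : S, ∀ f ∈ F, f * t ∈ A

theorem ultrafilter_on_thick_closed_under_preimage {S : Type*} [Semigroup S]
    (f : Filter S) [f.NeBot]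
    (hthick : ∀ A ∈ f, Thick A)
    (hmax : ∀ g : Filter S, g.NeBot → g ≤ f → (∀ A ∈ g, Thick A) → g = f)
    (A : Set S) (hA : A ∈ f) (s : S) : {t | s * t ∈ A} ∈ f := by
  set P : Set S := {t | s * t ∈ A} with hP
  set g : Filter S := f ⊓ 𝓟 P with hg
  -- every member of g is thick
  have hthickg : ∀ B ∈ g, Thick B := by
    intro B hB
    have hC : {x | x ∈ P → x ∈ B} ∈ f := Filter.mem_inf_principal.mp hB
    set C : Set S := {x | x ∈ P → x ∈ B} with hCdef
    have hCB : ∀ x ∈ C, x ∈ P → x ∈ B := fun x hx => hx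
    classical
    intro F
    have hCA : C ∩ A ∈ f := Filter.inter_mem hC hA
    obtain ⟨t, ht⟩ := hthick (C ∩ A) hCA (F ∪ F.image (s * ·))
    refine ⟨t, fun x hx => ?_⟩
    have hx1 : x * t ∈ C ∩ A := ht x (Finset.mem_union_left _ hx)
    have hx2 : (s * x) * t ∈ C ∩ A :=
      ht (s * x) (Finset.mem_union_right _ (Finset.mem_image_of_mem _ hx))
    have hxP : x * t ∈ P := by
      simp only [hP, Set.mem_setOf_eq, ← mul_assoc]
      exact hx2.2
    exact hCB _ hx1.1 hxP
  have hgne : g.NeBot := by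
    refine Filter.forall_mem_nonempty_iff_neBot.mp ?_
    intro B hB
    obtain ⟨t, ht⟩ := hthickg B hB {s}
    exact ⟨s * t, ht s (Finset.mem_singleton_self s)⟩
  have := hmax g hgne inf_le_left hthickg
  rw [← this]
  exact Filter.mem_inf_of_right (Filter.mem_principal_self P)
end

section
/- If S is a countable weakly cancellative semigroup, then Θ_S, the collection of S-thick subsets of S viewed as a subset of the Cantor space 2^S via characteristic functions, is a Gδ subset of 2^S. -/
open Set Filter

attribute [local instance] Ultrafilter.mul Ultrafilter.semigroup

theorem thick_isGδ {S : Type*} [Semigroup S] [Countable S]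
    (hwc : ∀ s t : S, {x | s * x = t}.Finite ∧ {x | x * s = t}.Finite) :
    IsGδ {f : S → Bool | Thick {s | f s = true}} := by
  have : {f : S → Bool | Thick {s | f s = true}} =
      ⋂ F : Finset S, ⋃ t : S, ⋂ s ∈ F, {f : S → Bool | f (s * t) = true} := by
    ext f
    simp only [mem_iInter, mem_iUnion, mem_setOf_eq, Thick]
  rw [this]
  refine .iInter fun F => IsOpen.isGδ ?_
  refine isOpen_iUnion fun t => isOpen_biInter_finset fun s _ => ?_
  have : {f : S → Bool | f (s * t) = true} =
        (fun f : S → Bool => f (s * t)) ⁻¹' {true} := by ext f; simp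
  rw [this]
  exact (isOpen_discrete _).preimage (continuous_apply (s * t))
end

section
/- If S is a countably infinite weakly cancellative semigroup, then the collection Θ_S of S-thick sets is a dense Gδ (hence comeager) subset of 2^S. -/
open Set Filter

attribute [local instance] Ultrafilter.mul Ultrafilter.semigroup

/-! The thick sets are the intersection, over the countably many finite `F ⊆ S`, of the sets
`translateTrueSet F` of those `f` for which some right translate `F * t` lies in `{f = true}`.
Each of these is open, since for fixed `t` it constrains finitely many coordinates, and dense:
given finitely many prescribed coordinates `I`, weak cancellativity lets us pick `t` with `F * t` disjoint from `I`,
and then setting `f` to `true` on `F * t` does not disturb the prescription. Baire's theorem in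
the compact space `2^S` finishes the argument. -/

theorem dense_of_forall_finset_exists_eqOn {ι : Type*} {X : ι → Type*}
    [∀ i, TopologicalSpace (X i)] {U : Set (∀ i, X i)}
    (h : ∀ (f : ∀ i, X i) (I : Finset ι), ∃ g ∈ U, ∀ i ∈ I, g i = f i) : Dense U := by
  refine dense_iff_inter_open.2 fun V hV ⟨f, hf⟩ => ?_
  obtain ⟨I, u, hfu, hIu⟩ := isOpen_pi_iff.1 hV f hf
  obtain ⟨g, hgU, hgf⟩ := h f I
  exact ⟨g, hIu fun i hi => hgf i hi ▸ (hfu i hi).2, hgU⟩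

theorem exists_forall_mul_notMem {S : Type*} [Mul S] [Infinite S]
    (hfin : ∀ s t : S, {x | s * x = t}.Finite) (F I : Finset S) :
    ∃ t : S, ∀ s ∈ F, s * t ∉ I := by
  have hbad : (⋃ s ∈ F, ⋃ i ∈ I, {x : S | s * x = i}).Finite :=
    F.finite_toSet.biUnion fun s _ => I.finite_toSet.biUnion fun i _ => hfin s i
  obtain ⟨t, ht⟩ := hbad.infinite_compl.nonempty
  exact ⟨t, fun s hs hst => ht (mem_biUnion hs (mem_biUnion hst rfl))⟩

section ThickSets

variable {S : Type*}

def translateTrueSet [Mul S] (F : Finset S) : Set (S → Bool) :=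
  {f | ∃ t : S, ∀ s ∈ F, f (s * t) = true}

theorem setOf_thick_eq_iInter_translateTrueSet [Semigroup S] :
    {f : S → Bool | Thick {s | f s = true}} = ⋂ F : Finset S, translateTrueSet F := by
  ext f
  simp only [mem_iInter, translateTrueSet, mem_ofPred_eq, Thick]

theorem isOpen_translateTrueSet [Mul S] (F : Finset S) : IsOpen (translateTrueSet F) := by
  have hU : translateTrueSet F = ⋃ t : S, ⋂ s ∈ F, (fun f : S → Bool => f (s * t)) ⁻¹' {true} := by
    ext f
    simp [translateTrueSet]
  rw [hU]
  exact isOpen_iUnion fun t => isOpen_biInter_finset fun s _ =>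
    (isOpen_discrete _).preimage (continuous_apply _)

theorem dense_translateTrueSet [Mul S] [Infinite S]
    (hfin : ∀ s t : S, {x | s * x = t}.Finite) (F : Finset S) :
    Dense (translateTrueSet F) := by
  classical
  refine dense_of_forall_finset_exists_eqOn fun f I => ?_
  obtain ⟨t, ht⟩ := exists_forall_mul_notMem hfin F I
  refine ⟨fun x => if x ∈ F.image (· * t) then true else f x, ⟨t, fun s hs => ?_⟩, fun i hi => ?_⟩
  · exact if_pos (Finset.mem_image_of_mem _ hs)
  · refine if_neg fun hiF => ?_
    obtain ⟨s, hs, rfl⟩ := Finset.mem_image.1 hiF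
    exact ht s hs hi

end ThickSets

theorem thick_dense_Gδ {S : Type*} [Semigroup S] [Countable S] [Infinite S]
    (hwc : ∀ s t : S, {x | s * x = t}.Finite ∧ {x | x * s = t}.Finite) :
    IsGδ {f : S → Bool | Thick {s | f s = true}} ∧
      Dense {f : S → Bool | Thick {s | f s = true}} := by
  rw [setOf_thick_eq_iInter_translateTrueSet]
  have hdense F := dense_translateTrueSet (fun s t => (hwc s t).1) F
  exact ⟨.iInter_of_isOpen isOpen_translateTrueSet,
    dense_iInter_of_isOpen isOpen_translateTrueSet hdense⟩
end

section
/- Let κ be an infinite regular cardinal and S a semigroup of cardinality κ that is κ-weakly cancellative (every equation s·x = t and x·s = t has fewer than κ solutions). If p is a uniform ultrafilter on S (every member of p has cardinality κ) and q is any ultrafilter on S, then the product ultrafilter q·p is uniform. -/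
open Set Filter

attribute [local instance] Ultrafilter.mul Ultrafilter.semigroup

theorem mul_uniform_left {S : Type u} [Semigroup S] (κ : Cardinal.{u})
    (hreg : κ.IsRegular) (hS : Cardinal.mk S = κ)
    (hwc : ∀ s t : S, Cardinal.mk {x | s * x = t} < κ ∧ Cardinal.mk {x | x * s = t} < κ)
    (p q : Ultrafilter S) (hp : ∀ A ∈ p, Cardinal.mk A = κ) :
    ∀ A ∈ q * p, Cardinal.mk A = κ := by
  intro A hA
  have hA' : ∀ᶠ s in (q : Filter S), ∀ᶠ x in (p : Filter S), s * x ∈ A :=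
    (Ultrafilter.eventually_mul q p (· ∈ A)).mp hA
  obtain ⟨s, hs⟩ := hA'.exists
  have hBp : {x | s * x ∈ A} ∈ p := hs
  have hBk : Cardinal.mk {x | s * x ∈ A} = κ := hp _ hBp
  refine le_antisymm (hS ▸ Cardinal.mk_set_le A) ?_
  by_contra h
  push_neg at h
  set f : {x | s * x ∈ A} → A := fun x => ⟨s * x.1, x.2⟩ with hf
  have hfib : ∀ a : A, Cardinal.mk (f ⁻¹' {a}) < κ := by
    intro a
    refine lt_of_le_of_lt ?_ (hwc s a.1).1
    refine Cardinal.mk_le_of_injective (f := fun x : f ⁻¹' {a} =>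
      (⟨x.1.1, congrArg Subtype.val x.2⟩ : {x | s * x = a.1})) ?_
    intro x y hxy
    simp only [Subtype.mk.injEq] at hxy
    exact Subtype.ext (Subtype.ext hxy)
  have heq : Cardinal.mk {x | s * x ∈ A} = Cardinal.sum fun a : A => Cardinal.mk (f ⁻¹' {a}) := by
    rw [← Cardinal.mk_sigma]
    exact (Cardinal.mk_congr (Equiv.sigmaFiberEquiv f)).symm
  have : Cardinal.sum (fun a : A => Cardinal.mk (f ⁻¹' {a})) < κ :=
    Cardinal.sum_lt_of_isRegular hreg h hfib
  rw [heq] at hBk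
  exact absurd hBk (ne_of_lt this)
end

section
/- Let κ be an infinite regular cardinal and S a κ-weakly cancellative semigroup with |S| = κ. If p is a uniform ultrafilter on S and q is any ultrafilter on S, then the product p·q is uniform. Consequently the set U(S) of uniform ultrafilters is a two-sided ideal of the semigroup βS. -/
open Set Filter

attribute [local instance] Ultrafilter.mul Ultrafilter.semigroup

section Aux

variable {S : Type u} [Semigroup S] {κ : Cardinal.{u}}

lemma mem_mul_iff (U V : Ultrafilter S) (A : Set S) :
    A ∈ U * V ↔ {s | {x | s * x ∈ A} ∈ V} ∈ U := Iff.rfl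

omit [Semigroup S] in
lemma union_small (hreg : κ.IsRegular) {ι : Type u} (f : ι → Set S)
    (hι : Cardinal.mk ι < κ) (hf : ∀ i, Cardinal.mk (f i) < κ) :
    Cardinal.mk (⋃ i, f i) < κ :=
  Cardinal.mk_iUnion_le_sum_mk.trans_lt (Cardinal.sum_lt_of_isRegular hreg hι hf)

-- the preimage s⁻¹A is small when A is small
lemma preimage_small (hreg : κ.IsRegular)
    (hwc : ∀ s t : S, Cardinal.mk {x | s * x = t} < κ ∧ Cardinal.mk {x | x * s = t} < κ)
    (s : S) (A : Set S) (hA : Cardinal.mk A < κ) :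
    Cardinal.mk {x | s * x ∈ A} < κ := by
  have : {x | s * x ∈ A} = ⋃ a : A, {x | s * x = (a : S)} := by
    ext x; simp [Set.mem_iUnion]
  rw [this]
  exact union_small hreg _ hA fun a => (hwc s a).1

end Aux

theorem uniform_two_sided_ideal {S : Type u} [Semigroup S] (κ : Cardinal.{u})
    (hreg : κ.IsRegular) (hS : Cardinal.mk S = κ)
    (hwc : ∀ s t : S, Cardinal.mk {x | s * x = t} < κ ∧ Cardinal.mk {x | x * s = t} < κ)
    (p q : Ultrafilter S) (hp : ∀ A ∈ p, Cardinal.mk A = κ) :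
    (∀ A ∈ p * q, Cardinal.mk A = κ) ∧
      (∀ r : Ultrafilter S, (∀ A ∈ r * p, Cardinal.mk A = κ) ∧
        (∀ A ∈ p * r, Cardinal.mk A = κ)) := by
  -- p * r is uniform for any r
  have hleft : ∀ r : Ultrafilter S, ∀ A ∈ p * r, Cardinal.mk A = κ := by
    intro r A hA
    refine le_antisymm (hS ▸ Cardinal.mk_set_le A) ?_
    by_contra hlt
    push_neg at hlt
    rw [mem_mul_iff] at hA
    have hB : Cardinal.mk {s | {x | s * x ∈ A} ∈ r} = κ := hp _ hA
    obtain ⟨s₀, hs₀⟩ := Ultrafilter.nonempty_of_mem hA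
    set C : Set S := {x | s₀ * x ∈ A} with hC
    have hCsmall : Cardinal.mk C < κ := preimage_small hreg hwc s₀ A hlt
    -- every s in B has a witness x ∈ C with s * x ∈ A
    have hsub : {s | {x | s * x ∈ A} ∈ r} ⊆
        ⋃ x : C, ⋃ a : A, {s | s * (x : S) = (a : S)} := by
      intro s hs
      have hne : ({x | s * x ∈ A} ∩ C).Nonempty :=
        Ultrafilter.nonempty_of_mem (inter_mem hs hs₀)
      obtain ⟨x, hx1, hx2⟩ := hne
      simp only [Set.mem_iUnion]
      exact ⟨⟨x, hx2⟩, ⟨s * x, hx1⟩, rfl⟩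
    have : Cardinal.mk {s | {x | s * x ∈ A} ∈ r} < κ := by
      refine (Cardinal.mk_le_mk_of_subset hsub).trans_lt ?_
      refine union_small hreg _ hCsmall fun x => ?_
      exact union_small hreg _ hlt fun a => (hwc x a).2
    exact absurd hB this.ne
  -- r * p is uniform for any r
  have hright : ∀ r : Ultrafilter S, ∀ A ∈ r * p, Cardinal.mk A = κ := by
    intro r A hA
    refine le_antisymm (hS ▸ Cardinal.mk_set_le A) ?_
    by_contra hlt
    push_neg at hlt
    rw [mem_mul_iff] at hA
    obtain ⟨s, hs⟩ := Ultrafilter.nonempty_of_mem hA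
    have : Cardinal.mk {x | s * x ∈ A} = κ := hp _ hs
    exact absurd this (preimage_small hreg hwc s A hlt).ne
  exact ⟨hleft q, fun r => ⟨hright r, hleft r⟩⟩
end

section
/- Let S be a left-cancellative semigroup, let L be a minimal left ideal of βS, and let p ∈ βS with p ∉ L. Then for every s ∈ S, s·p ∉ L. -/
open Set Filter

attribute [local instance] Ultrafilter.mul Ultrafilter.semigroup

def IsLeftIdeal {S : Type*} [Semigroup S] (L : Set (Ultrafilter S)) : Prop :=
  L.Nonempty ∧ ∀ p ∈ L, ∀ q : Ultrafilter S, q * p ∈ L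

def IsMinimalLeftIdeal {S : Type*} [Semigroup S] (L : Set (Ultrafilter S)) : Prop :=
  IsLeftIdeal L ∧ ∀ L' : Set (Ultrafilter S), IsLeftIdeal L' → L' ⊆ L → L' = L

/-- If `x` lies in a minimal left ideal `L`, then `L = βS ⬝ x`. -/
lemma range_mul_eq_of_mem {S : Type*} [Semigroup S] {L : Set (Ultrafilter S)}
    (hL : IsMinimalLeftIdeal L) {x : Ultrafilter S} (hx : x ∈ L) :
    Set.range (fun q : Ultrafilter S => q * x) = L := by
  apply hL.2
  · refine ⟨⟨x * x, ⟨x, rfl⟩⟩, ?_⟩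
    rintro _ ⟨r, rfl⟩ q
    exact ⟨q * r, mul_assoc q r x⟩
  · rintro _ ⟨q, rfl⟩
    exact hL.1.2 x hx q

/-- Left multiplication by `pure s` is injective when `S` is left cancellative. -/
lemma pure_mul_left_cancel {S : Type*} [Semigroup S]
    (hlc : ∀ s x y : S, s * x = s * y → x = y) (s : S) {q r : Ultrafilter S}
    (h : (pure s : Ultrafilter S) * q = (pure s : Ultrafilter S) * r) : q = r := by
  ext A
  have key : ∀ u : Ultrafilter S,
      A ∈ u ↔ ((fun b => s * b) '' A) ∈ (pure s : Ultrafilter S) * u := by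
    intro u
    have h1 : ((fun b => s * b) '' A) ∈ (pure s : Ultrafilter S) * u ↔
        ∀ᶠ m in (pure s : Ultrafilter S), ∀ᶠ m' in u, m * m' ∈ (fun b => s * b) '' A :=
      Ultrafilter.eventually_mul _ _ _
    rw [h1]
    simp only [Ultrafilter.coe_pure, Filter.eventually_pure]
    have : {m' | s * m' ∈ (fun b => s * b) '' A} = A := by
      ext m'
      constructor
      · rintro ⟨b, hb, hsb⟩
        rwa [hlc s b m' hsb] at hb
      · intro hm'
        exact ⟨m', hm', rfl⟩
    rw [show (∀ᶠ m' in (u : Filter S), s * m' ∈ (fun b => s * b) '' A) ↔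
        {m' | s * m' ∈ (fun b => s * b) '' A} ∈ u from Iff.rfl, this]
  rw [key q, key r, h]

theorem smul_not_mem_minimal_left_ideal {S : Type*} [Semigroup S]
    (hlc : ∀ s x y : S, s * x = s * y → x = y)
    (L : Set (Ultrafilter S)) (hL : IsMinimalLeftIdeal L)
    (p : Ultrafilter S) (hp : p ∉ L) (s : S) :
    (pure s : Ultrafilter S) * p ∉ L := by
  intro h
  set x : Ultrafilter S := (pure s : Ultrafilter S) * p with hx
  -- L equals βS ⬝ x, hence is compact
  have hLr : Set.range (fun q : Ultrafilter S => q * x) = L := range_mul_eq_of_mem hL h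
  have hLcompact : IsCompact L := by
    rw [← hLr]
    exact (isCompact_range (Ultrafilter.continuous_mul_left x))
  -- L is a subsemigroup
  have hLsub : ∀ a ∈ L, ∀ b ∈ L, a * b ∈ L := fun a _ b hb => hL.1.2 b hb a
  -- get an idempotent e ∈ L
  obtain ⟨e, heL, hee⟩ := exists_idempotent_in_compact_subsemigroup
    Ultrafilter.continuous_mul_left L ⟨x, h⟩ hLcompact hLsub
  -- x * e = x
  have hxe : x * e = x := by
    have : x ∈ Set.range (fun q : Ultrafilter S => q * e) := by
      rw [range_mul_eq_of_mem hL heL]; exact h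
    obtain ⟨q, hq⟩ := this
    have hq : q * e = x := hq
    calc x * e = q * e * e := by rw [hq]
    _ = q * (e * e) := mul_assoc _ _ _
    _ = q * e := by rw [hee]
    _ = x := hq
  -- hence pure s * (p * e) = pure s * p, so p * e = p by cancellation
  have hpe : p * e = p := by
    apply pure_mul_left_cancel hlc s
    calc (pure s : Ultrafilter S) * (p * e) = x * e := (mul_assoc _ _ _).symm
    _ = x := hxe
  exact hp (hpe ▸ hL.1.2 e heL p)
end

section
/- Let κ be an infinite regular cardinal and S a semigroup of cardinality κ that is κ-weakly cancellative. Then there exists a partition {X_α : α < κ} of S such that |X_α| < κ for all α, and for every A ⊆ κ of cardinality κ, the union ⋃_{α∈A} X_α is S-thick. -/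
open Set Filter

/-!
Well-order `S` in type `κ.ord`, so that every initial segment has fewer than `κ` elements, and
build the pieces `X a` by transfinite recursion: `X a` receives `a` and, for each finite `F`
below `a`, one translate `F * t` disjoint from the union `P` of the earlier pieces. Such a `t`
exists because `P` is small and, by weak cancellativity, each `f * t ∈ P` constrains `t` to fewer
than `κ` values. Each piece is then a union of fewer than `κ` finite sets, and a `κ`-sized `A`
contains some `a` above all of a given finite `F`, so that `F * t ⊆ X a` for some `t`.
-/

section

open Cardinal

theorem Cardinal.mk_finset_lt {β : Type*} {κ : Cardinal} (hκ : ℵ₀ ≤ κ) (hβ : #β < κ) :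
    #(Finset β) < κ := by
  cases finite_or_infinite β
  · exact (lt_aleph0_of_finite _).trans_le hκ
  · rwa [mk_finset_of_infinite]

theorem Cardinal.mk_setOf_finset_subset_lt {α : Type*} {κ : Cardinal} (hκ : ℵ₀ ≤ κ) {s : Set α}
    (hs : #s < κ) : #{F : Finset α | ↑F ⊆ s} < κ := by
  classical
  have hinj : Function.Injective fun F : {F : Finset α | ↑F ⊆ s} => F.1.subtype (· ∈ s) := by
    rintro ⟨F, hF⟩ ⟨G, hG⟩ h
    rw [Subtype.mk.injEq, ← Finset.subtype_map_of_mem (p := (· ∈ s)) hF,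
      ← Finset.subtype_map_of_mem (p := (· ∈ s)) hG]
    exact congrArg _ h
  exact (mk_le_of_injective hinj).trans_lt (mk_finset_lt hκ hs)

section TransfinitePieces

variable {α : Type u} [LinearOrder α] [WellFoundedLT α] (g : Finset α → Set α → Set α)

noncomputable def transfinitePieces : α → Set α :=
  wellFounded_lt.fix fun a piece =>
    let P := ⋃ b, ⋃ h : b < a, piece b h
    insert a (⋃ F ∈ {F : Finset α | ↑F ⊆ Iio a}, g F P) \ P

theorem transfinitePieces_eq (a : α) :
    transfinitePieces g a =
      insert a (⋃ F ∈ {F : Finset α | ↑F ⊆ Iio a}, g F (⋃ b < a, transfinitePieces g b)) \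
        ⋃ b < a, transfinitePieces g b := by
  rw [transfinitePieces, WellFounded.fix_eq]

theorem disjoint_transfinitePieces_biUnion_lt (a : α) :
    Disjoint (transfinitePieces g a) (⋃ b < a, transfinitePieces g b) := by
  rw [transfinitePieces_eq]
  exact disjoint_sdiff_left

theorem pairwise_disjoint_transfinitePieces :
    Pairwise (Function.onFun Disjoint (transfinitePieces g)) := by
  have key : ∀ {a b : α}, b < a → Disjoint (transfinitePieces g a) (transfinitePieces g b) :=
    fun {a b} hba => (disjoint_transfinitePieces_biUnion_lt g a).mono_right
      (subset_biUnion_of_mem (u := transfinitePieces g) hba)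
  intro a b hab
  rcases hab.lt_or_gt with h | h
  · exact (key h).symm
  · exact key h

theorem iUnion_transfinitePieces : ⋃ a, transfinitePieces g a = Set.univ := by
  refine eq_univ_of_forall fun a => ?_
  by_cases ha : a ∈ ⋃ b < a, transfinitePieces g b
  · exact iUnion₂_subset_iUnion _ _ ha
  · refine mem_iUnion_of_mem a ?_
    rw [transfinitePieces_eq]
    exact ⟨mem_insert a _, ha⟩

theorem subset_transfinitePieces {a : α} {F : Finset α} (hF : ↑F ⊆ Iio a)
    (hg : Disjoint (g F (⋃ b < a, transfinitePieces g b)) (⋃ b < a, transfinitePieces g b)) :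
    g F (⋃ b < a, transfinitePieces g b) ⊆ transfinitePieces g a := by
  rw [transfinitePieces_eq]
  exact subset_sdiff.2 ⟨(subset_biUnion_of_mem (u := fun F => g F _) hF).trans
    (subset_insert _ _), hg⟩

variable {g} {κ : Cardinal.{u}} (hκ : κ.IsRegular) (hIio : ∀ a : α, #(Iio a) < κ)
  (hg : ∀ (F : Finset α) (P : Set α), #P < κ → #(g F P) < κ)
include hκ hIio hg

theorem mk_transfinitePieces_lt (a : α) : #(transfinitePieces g a) < κ := by
  induction a using WellFoundedLT.induction with
  | ind a ih =>
    have hP : #(⋃ b < a, transfinitePieces g b) < κ :=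
      (card_biUnion_lt_iff_forall_of_isRegular hκ (hIio a)).2 ih
    have hU : #(⋃ F ∈ {F : Finset α | ↑F ⊆ Iio a}, g F (⋃ b < a, transfinitePieces g b)) < κ :=
      (card_biUnion_lt_iff_forall_of_isRegular hκ
        (mk_setOf_finset_subset_lt hκ.aleph0_le (hIio a))).2 fun F _ => hg F _ hP
    rw [transfinitePieces_eq]
    exact (mk_le_mk_of_subset sdiff_subset).trans_lt
      (mk_insert_le.trans_lt (add_lt_of_lt hκ.aleph0_le hU
        (one_lt_aleph0.trans_le hκ.aleph0_le)))

theorem mk_biUnion_transfinitePieces_lt (a : α) :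
    #(⋃ b < a, transfinitePieces g b) < κ :=
  (card_biUnion_lt_iff_forall_of_isRegular hκ (hIio a)).2 fun b _ =>
    mk_transfinitePieces_lt hκ hIio hg b

end TransfinitePieces

theorem exists_mem_forall_lt_of_mk_eq {α : Type*} [LinearOrder α] {κ : Cardinal} (hκ : ℵ₀ ≤ κ)
    (hIio : ∀ a : α, #(Iio a) < κ) {A : Set α} (hA : #A = κ) (F : Finset α) :
    ∃ a ∈ A, ∀ f ∈ F, f < a := by
  have : Nonempty α :=
    (nonempty_coe_sort.1 (mk_ne_zero_iff.1 (hA ▸ (aleph0_pos.trans_le hκ).ne'))).to_type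
  obtain ⟨M, hM⟩ := F.exists_le
  have hIic : #(Iic M) < κ := by
    rw [← Iio_insert]
    exact mk_insert_le.trans_lt (add_lt_of_lt hκ (hIio M) (one_lt_aleph0.trans_le hκ))
  obtain ⟨a, haA, haM⟩ := not_subset.1 fun h => ((mk_le_mk_of_subset h).trans_lt hIic).ne hA
  exact ⟨a, haA, fun f hf => (hM f hf).trans_lt (not_le.1 haM)⟩

section Semigroup

variable {S : Type u} [Semigroup S]

open Classical in
noncomputable def translateAvoiding (F : Finset S) (P : Set S) : Set S :=
  if h : ∃ t, ∀ f ∈ F, f * t ∉ P then (· * h.choose) '' F else ∅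

theorem finite_translateAvoiding (F : Finset S) (P : Set S) :
    (translateAvoiding F P).Finite := by
  unfold translateAvoiding
  split_ifs
  exacts [F.finite_toSet.image _, finite_empty]

theorem disjoint_translateAvoiding (F : Finset S) (P : Set S) :
    Disjoint (translateAvoiding F P) P := by
  unfold translateAvoiding
  split_ifs with h
  · rw [disjoint_left]
    rintro _ ⟨f, hf, rfl⟩
    exact h.choose_spec f hf
  · exact empty_disjoint P

theorem exists_forall_mul_mem_translateAvoiding {F : Finset S} {P : Set S}
    (h : ∃ t, ∀ f ∈ F, f * t ∉ P) : ∃ t, ∀ f ∈ F, f * t ∈ translateAvoiding F P := by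
  rw [translateAvoiding, dif_pos h]
  exact ⟨h.choose, fun f hf => mem_image_of_mem _ hf⟩

theorem exists_forall_mul_notMem_s15 {κ : Cardinal.{u}} (hκ : κ.IsRegular) (hS : #S = κ)
    (hcancel : ∀ s t : S, #{x | s * x = t} < κ) {P : Set S} (hP : #P < κ) (F : Finset S) :
    ∃ t, ∀ f ∈ F, f * t ∉ P := by
  have hbad : #(⋃ f ∈ (F : Set S), ⋃ y ∈ P, {x | f * x = y}) < κ :=
    (card_biUnion_lt_iff_forall_of_isRegular hκ
      ((finset_card_lt_aleph0 F).trans_le hκ.aleph0_le)).2 fun f _ =>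
      (card_biUnion_lt_iff_forall_of_isRegular hκ hP).2 fun y _ => hcancel f y
  obtain ⟨t, ht⟩ : ∃ t, t ∉ ⋃ f ∈ (F : Set S), ⋃ y ∈ P, {x | f * x = y} := by
    by_contra! h
    rw [eq_univ_of_forall h, mk_univ, hS] at hbad
    exact hbad.false
  simp only [mem_iUnion, mem_ofPred_eq, exists_prop, not_exists, not_and] at ht
  exact ⟨t, fun f hf hfP => ht f hf _ hfP rfl⟩

end Semigroup

end

theorem exists_thick_partition {S : Type u} [Semigroup S] (κ : Cardinal.{u})
    (hreg : κ.IsRegular) (hS : Cardinal.mk S = κ)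
    (hwc : ∀ s t : S, Cardinal.mk {x | s * x = t} < κ ∧ Cardinal.mk {x | x * s = t} < κ) :
    ∃ (ι : Type u) (X : ι → Set S), Cardinal.mk ι = κ ∧
      Pairwise (Function.onFun Disjoint X) ∧
      (⋃ α, X α) = univ ∧
      (∀ α, Cardinal.mk (X α) < κ) ∧
      (∀ A : Set ι, Cardinal.mk A = κ → Thick (⋃ α ∈ A, X α)) := by
  obtain ⟨_, _, hord⟩ := Cardinal.exists_ord_eq_type_lt S
  have hIio : ∀ a : S, Cardinal.mk (Iio a) < κ := fun a => hS ▸ Cardinal.mk_Iio_lt a hord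
  have hg : ∀ (F : Finset S) (P : Set S), Cardinal.mk P < κ →
      Cardinal.mk (translateAvoiding F P) < κ :=
    fun F P _ => (finite_translateAvoiding F P).lt_aleph0.trans_le hreg.aleph0_le
  refine ⟨S, transfinitePieces translateAvoiding, hS, pairwise_disjoint_transfinitePieces _,
    iUnion_transfinitePieces _, mk_transfinitePieces_lt hreg hIio hg, fun A hA F => ?_⟩
  obtain ⟨a, haA, hFa⟩ := exists_mem_forall_lt_of_mk_eq hreg.aleph0_le hIio hA F
  obtain ⟨t, ht⟩ := exists_forall_mul_mem_translateAvoiding <| exists_forall_mul_notMem_s15 hreg hS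
    (fun s t => (hwc s t).1) (mk_biUnion_transfinitePieces_lt hreg hIio hg a) F
  exact ⟨t, fun f hf => mem_biUnion haA <| subset_transfinitePieces _ hFa
    (disjoint_translateAvoiding F _) (ht f hf)⟩
end

section
/- Let S be a countably infinite weakly cancellative semigroup. Then there exists a partition {X_n : n < ω} of S into finite sets such that for every infinite A ⊆ ω, the set ⋃_{n∈A} X_n is S-thick. -/
open Set Filter

theorem exists_thick_partition_countable {S : Type*} [Semigroup S] [Countable S] [Infinite S]
    (hwc : ∀ s t : S, {x | s * x = t}.Finite ∧ {x | x * s = t}.Finite) :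
    ∃ X : ℕ → Set S,
      Pairwise (Function.onFun Disjoint X) ∧
      (⋃ n, X n) = univ ∧
      (∀ n, (X n).Finite) ∧
      (∀ A : Set ℕ, A.Infinite → Thick (⋃ n ∈ A, X n)) := by
  classical
  obtain ⟨e, he⟩ := exists_surjective_nat S
  -- key: can translate any finite set off any finite set
  have key : ∀ F B : Finset S, ∃ t : S, ∀ f ∈ F, f * t ∉ B := by
    intro F B
    have hfin : ({t : S | ∃ f ∈ F, f * t ∈ B}).Finite := by
      have hsub : {t : S | ∃ f ∈ F, f * t ∈ B} ⊆
          ⋃ f ∈ (F : Set S), ⋃ b ∈ (B : Set S), {x | f * x = b} := by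
        rintro t ⟨f, hf, hfb⟩
        exact Set.mem_biUnion hf (Set.mem_biUnion hfb rfl)
      refine Set.Finite.subset ?_ hsub
      exact F.finite_toSet.biUnion fun f _ =>
        B.finite_toSet.biUnion fun b _ => (hwc f b).1
    obtain ⟨t, ht⟩ := hfin.infinite_compl.nonempty
    exact ⟨t, fun f hf hb => ht ⟨f, hf, hb⟩⟩
  choose T hT using key
  set Fn : ℕ → Finset S := fun n => (Finset.range (n + 1)).image e with hFn
  set mk : ℕ → Finset S → Finset S := fun n B =>
    (Fn n).image (fun f => f * T (Fn n) B) ∪ ({e n} \ B) with hmk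
  set P : ℕ → Finset S × Finset S := fun n =>
    Nat.rec (mk 0 ∅, ∅) (fun n p => (mk (n + 1) (p.2 ∪ p.1), p.2 ∪ p.1)) n with hP
  set X : ℕ → Finset S := fun n => (P n).1 with hXdef
  set B : ℕ → Finset S := fun n => (P n).2 with hBdef
  have hB0 : B 0 = ∅ := rfl
  have hBs : ∀ n, B (n + 1) = B n ∪ X n := fun n => rfl
  have hXeq : ∀ n, X n = mk n (B n) := by
    intro n; cases n <;> rfl
  -- X n is disjoint from B n
  have hdisj : ∀ n, ∀ x ∈ X n, x ∉ B n := by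
    intro n x hx hxB
    rw [hXeq n, hmk] at hx
    simp only [Finset.mem_union, Finset.mem_image, Finset.mem_sdiff,
      Finset.mem_singleton] at hx
    rcases hx with ⟨f, hf, rfl⟩ | ⟨rfl, hne⟩
    · exact hT (Fn n) (B n) f hf hxB
    · exact hne hxB
  -- members of X k with k < n lie in B n
  have hXB : ∀ k n, k < n → ∀ x ∈ X k, x ∈ B n := by
    intro k n hkn
    induction n with
    | zero => omega
    | succ n ih =>
      intro x hx
      rw [hBs n, Finset.mem_union]
      rcases Nat.lt_succ_iff_lt_or_eq.mp hkn with h | rfl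
      · exact Or.inl (ih h x hx)
      · exact Or.inr hx
  -- translate part is inside X n
  have htrans : ∀ n, ∀ f ∈ Fn n, f * T (Fn n) (B n) ∈ X n := by
    intro n f hf
    rw [hXeq n, hmk]
    exact Finset.mem_union_left _ (Finset.mem_image_of_mem _ hf)
  -- coverage: e n ∈ B n ∪ X n
  have hcover : ∀ n, e n ∈ B n ∪ X n := by
    intro n
    by_cases h : e n ∈ B n
    · exact Finset.mem_union_left _ h
    · refine Finset.mem_union_right _ ?_
      rw [hXeq n, hmk]
      exact Finset.mem_union_right _ (by simp [h])
  -- B n is contained in the union of earlier X's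
  have hBsub : ∀ n, ∀ x ∈ B n, ∃ k, x ∈ X k := by
    intro n
    induction n with
    | zero => intro x hx; simp [hB0] at hx
    | succ n ih =>
      intro x hx
      rw [hBs n, Finset.mem_union] at hx
      rcases hx with h | h
      · exact ih x h
      · exact ⟨n, h⟩
  refine ⟨fun n => (X n : Set S), ?_, ?_, fun n => (X n).finite_toSet, ?_⟩
  · have hd : ∀ i j : ℕ, i < j → Disjoint ((X i : Set S)) (X j) := by
      intro i j h
      rw [Set.disjoint_left]
      intro x hx hxj
      exact hdisj j x hxj (hXB i j h x hx)
    intro i j hij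
    rcases lt_or_gt_of_ne hij with h | h
    · exact hd i j h
    · exact (hd j i h).symm
  · ext x
    simp only [Set.mem_iUnion, Set.mem_univ, iff_true, Finset.coe_sort_coe]
    obtain ⟨n, rfl⟩ := he x
    rcases Finset.mem_union.mp (hcover n) with h | h
    · obtain ⟨k, hk⟩ := hBsub n _ h
      exact ⟨k, hk⟩
    · exact ⟨n, h⟩
  · intro A hA F
    -- find m bounding indices of F
    have hm : ∃ m : ℕ, ∀ f ∈ F, ∃ k ≤ m, e k = f := by
      have : ∀ f : S, ∃ k, e k = f := he
      choose idx hidx using this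
      refine ⟨F.sup idx, fun f hf => ⟨idx f, Finset.le_sup hf, hidx f⟩⟩
    obtain ⟨m, hmF⟩ := hm
    obtain ⟨n, hnA, hmn⟩ := hA.exists_gt m
    refine ⟨T (Fn n) (B n), fun f hf => ?_⟩
    obtain ⟨k, hk, rfl⟩ := hmF f hf
    have hfFn : e k ∈ Fn n := by
      rw [hFn]
      exact Finset.mem_image_of_mem e (Finset.mem_range.mpr (by omega))
    exact Set.mem_biUnion hnA (htrans n (e k) hfFn)
end

section
/- Let S be a semigroup and F an ultrafilter on the S-thick sets (a maximal filter all of whose members are S-thick). Then the closed set F̃ = ⋂_{A∈F} cl(A) ⊆ βS is a left ideal of βS: s·F̃ ⊆ F̃ for every s ∈ S, hence βS·F̃ ⊆ F̃. -/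
open Set Filter

attribute [local instance] Ultrafilter.mul Ultrafilter.semigroup

lemma preimage_mem_of_maxthick {S : Type*} [Semigroup S]
    (f : Filter S) [f.NeBot]
    (hthick : ∀ A ∈ f, Thick A)
    (hmax : ∀ g : Filter S, g.NeBot → g ≤ f → (∀ A ∈ g, Thick A) → g = f)
    (s : S) {A : Set S} (hA : A ∈ f) : (fun x => s * x) ⁻¹' A ∈ f := by
  classical
  set g := f ⊓ Filter.comap (fun x => s * x) f with hg
  have hg_le : g ≤ f := inf_le_left
  have hne : Nonempty S := Filter.nonempty_of_neBot f
  have hthick_g : ∀ B ∈ g, Thick B := by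
    intro B hB
    rw [hg, Filter.mem_inf_iff] at hB
    obtain ⟨t₁, ht₁, t₂, ht₂, rfl⟩ := hB
    obtain ⟨A₂, hA₂, hsub⟩ := Filter.mem_comap.mp ht₂
    intro F
    obtain ⟨t, ht⟩ := hthick (t₁ ∩ A₂) (Filter.inter_mem ht₁ hA₂)
      (F ∪ F.image (fun x => s * x))
    refine ⟨t, fun x hx => ?_⟩
    have h1 := ht x (Finset.mem_union_left _ hx)
    have h2 := ht (s * x) (Finset.mem_union_right _ (Finset.mem_image_of_mem _ hx))
    exact ⟨h1.1, hsub (by simpa [Set.mem_preimage, mul_assoc] using h2.2)⟩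
  have hg_neBot : g.NeBot := by
    rw [← Filter.forall_mem_nonempty_iff_neBot]
    intro B hB
    obtain ⟨a⟩ := hne
    obtain ⟨t, ht⟩ := hthick_g B hB {a}
    exact ⟨a * t, ht a (Finset.mem_singleton_self a)⟩
  have := hmax g hg_neBot hg_le hthick_g
  rw [← this]
  exact Filter.le_def.mp (inf_le_right (a := f)) _ (Filter.preimage_mem_comap hA)

theorem stone_dual_left_ideal {S : Type*} [Semigroup S]
    (f : Filter S) [f.NeBot]
    (hthick : ∀ A ∈ f, Thick A)
    (hmax : ∀ g : Filter S, g.NeBot → g ≤ f → (∀ A ∈ g, Thick A) → g = f) :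
    (∀ s : S, ∀ p : Ultrafilter S, f ≤ ↑p → f ≤ ↑((pure s : Ultrafilter S) * p)) ∧
      (∀ q p : Ultrafilter S, f ≤ ↑p → f ≤ ↑(q * p)) := by
  have key : ∀ p : Ultrafilter S, f ≤ ↑p → ∀ s : S, ∀ A ∈ f,
      A ∈ ((pure s : Ultrafilter S) * p : Ultrafilter S) := by
    intro p hp s A hA
    have hfp : (↑p : Filter S) = f := (p.unique hp).symm
    have hpre := preimage_mem_of_maxthick f hthick hmax s hA
    refine (Ultrafilter.eventually_mul _ _ _).mpr ?_
    simp only [Ultrafilter.coe_pure, Filter.eventually_pure]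
    exact hfp ▸ hpre
  constructor
  · intro s p hp
    have hfp : (↑p : Filter S) = f := (p.unique hp).symm
    have hle : (↑((pure s : Ultrafilter S) * p) : Filter S) ≤ ↑p := by
      rw [hfp]; exact fun A hA => key p hp s A hA
    have heq := p.unique hle
    rw [heq]; exact hp
  · intro q p hp
    have hfp : (↑p : Filter S) = f := (p.unique hp).symm
    have hle : (↑(q * p) : Filter S) ≤ ↑p := by
      rw [hfp]
      intro A hA
      refine (Ultrafilter.eventually_mul _ _ _).mpr (Eventually.of_forall fun m => ?_)
      have hpre := preimage_mem_of_maxthick f hthick hmax m hA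
      exact hfp ▸ hpre
    have heq := p.unique hle
    rw [heq]; exact hp
end
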